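/- Let Δ₊ be the positive roots of a finite root system. A subset A ⊆ Δ₊ is called compatible if for every γ ∈ A and every decomposition γ = α + β with α, β ∈ Δ₊ we have α ∈ A or β ∈ A. Then A is compatible if and only if for every α ∈ A and every decomposition α = γ₁ + ⋯ + γ_n with all γ_i ∈ Δ₊ (n ≥ 2), there exists i with γ_i ∈ A. -/

import Mathlib

/-- A root system (the older Mathlib structure `RootSystem`, removed upstream): a root pairing
whose roots and coroots span. -/
structure RootSystem (ι R M N : Type*) [CommRing R] [AddCommGroup M] [Module R M]
    [AddCommGroup N] [Module R N] extends RootPairing ι R M N where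
  span_eq_top : Submodule.span R (Set.range root) = ⊤
  span_coroot_eq_top : Submodule.span R (Set.range coroot) = ⊤

/-- A finite crystallographic reduced root system together with a base (set of simple
roots), the integer coordinates of every root with respect to the base, and the sign
condition singling out the positive roots. -/
structure PRS (ι M N : Type*) [Fintype ι] [AddCommGroup M] [Module ℚ M]
    [AddCommGroup N] [Module ℚ N] where
  P : RootSystem ι ℚ M N
  crys : P.IsCrystallographic
  red : P.IsReduced
  base : Finset ι
  baseIndep : LinearIndependent ℚ (fun i : base => P.root i)
  coeff : ι → ι → ℤ
  coeff_supp : ∀ j i, i ∉ base → coeff j i = 0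
  coeff_spec : ∀ j, P.root j = ∑ i ∈ base, (coeff j i : ℚ) • P.root i
  coeff_sign : ∀ j, (∀ i, 0 ≤ coeff j i) ∨ (∀ i, coeff j i ≤ 0)

namespace PRS

variable {ι M N : Type*} [Fintype ι] [AddCommGroup M] [Module ℚ M]
    [AddCommGroup N] [Module ℚ N] (S : PRS ι M N)

/-- The index `j` corresponds to a positive root. -/
def IsPosIdx (j : ι) : Prop := ∀ i, 0 ≤ S.coeff j i

/-- The set of positive roots, viewed as vectors in `M`. -/
def posRoots : Set M := {v | ∃ j, S.IsPosIdx j ∧ v = S.P.root j}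

/-- The height of the root indexed by `j`. -/
def ht (j : ι) : ℤ := ∑ i ∈ S.base, S.coeff j i

/-- A subset `B` of the positive roots is closed by sums if whenever `α, β ∈ B` and
`α + β` is again a (positive) root, then `α + β ∈ B`. -/
def ClosedBySums (B : Set M) : Prop :=
  ∀ α ∈ B, ∀ β ∈ B, α + β ∈ S.posRoots → α + β ∈ B

/-- A subset `A` of the positive roots is compatible if every decomposition of an
element of `A` as the sum of two positive roots has a summand in `A`. -/
def Compatible (A : Set M) : Prop :=
  ∀ γ ∈ A, ∀ α ∈ S.posRoots, ∀ β ∈ S.posRoots, γ = α + β → α ∈ A ∨ β ∈ A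

end PRS


section Aux

open RootPairing Set

variable {ι M N : Type*} [Fintype ι] [AddCommGroup M] [Module ℚ M]
    [AddCommGroup N] [Module ℚ N]

lemma myCS (P : RootSystem ι ℚ M N) (i j : ι) :
    P.RootForm (P.root i) (P.root j) * P.RootForm (P.root i) (P.root j)
      ≤ P.RootForm (P.root i) (P.root i) * P.RootForm (P.root j) (P.root j) := by
  set B := P.RootForm
  set x := P.root i
  set y := P.root j
  have hsymm : B y x = B x y := by
    simpa using (P.rootForm_symmetric.eq y x)
  have h0 := P.zero_le_rootForm (B y y • x - B x y • y)
  have hy : 0 < B y y :=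
    P.rootForm_pos_of_ne_zero (Submodule.subset_span (Set.mem_range_self j)) (P.ne_zero j)
  simp only [map_sub, map_smul, LinearMap.sub_apply, LinearMap.smul_apply, smul_eq_mul] at h0
  rw [hsymm] at h0
  nlinarith [hy, h0]

lemma prs_key_lemma (P : RootSystem ι ℚ M N) (hcrys : P.IsCrystallographic) (hred : P.IsReduced)
    (i j : ι) (hne : P.root i ≠ P.root j) (hpos : 0 < P.pairing i j) :
    ∃ k, P.root i - P.root j = P.root k := by
  haveI := hcrys
  have hij : i ≠ j := fun h => hne (by rw [h])
  have h : 0 < P.pairingIn ℤ i j := by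
    have : ((P.pairingIn ℤ i j : ℤ) : ℚ) = P.pairing i j := P.algebraMap_pairingIn ℤ i j
    exact_mod_cast this ▸ hpos
  obtain ⟨k, hk⟩ := P.root_sub_root_mem_of_pairingIn_pos h hij
  exact ⟨k, hk.symm⟩


open RootPairing Set

variable {ι M N : Type*} [Fintype ι] [AddCommGroup M] [Module ℚ M]
    [AddCommGroup N] [Module ℚ N] (S : PRS ι M N)

namespace PRS

lemma coeff_unique (k : ι) (c : ι → ℚ)
    (h : S.P.root k = ∑ i ∈ S.base, c i • S.P.root i) :
    ∀ i ∈ S.base, (S.coeff k i : ℚ) = c i := by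
  intro i hi
  have hsum : ∑ x : S.base, (((S.coeff k x : ℚ) - c x) • S.P.root (x : ι)) = 0 := by
    rw [Finset.sum_coe_sort S.base (fun x => ((S.coeff k x : ℚ) - c x) • S.P.root x)]
    simp only [sub_smul, Finset.sum_sub_distrib]
    rw [← S.coeff_spec k, ← h, sub_self]
  have := Fintype.linearIndependent_iff.mp S.baseIndep
    (fun x : S.base => (S.coeff k x : ℚ) - c x) hsum ⟨i, hi⟩
  linarith [this]

lemma sum_expand {n : ℕ} (f : Fin n → ι) :
    ∑ l, S.P.root (f l) = ∑ i ∈ S.base, (∑ l, (S.coeff (f l) i : ℚ)) • S.P.root i := by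
  calc ∑ l, S.P.root (f l)
      = ∑ l, ∑ i ∈ S.base, (S.coeff (f l) i : ℚ) • S.P.root i :=
        Finset.sum_congr rfl fun l _ => S.coeff_spec (f l)
    _ = ∑ i ∈ S.base, ∑ l, (S.coeff (f l) i : ℚ) • S.P.root i := Finset.sum_comm
    _ = ∑ i ∈ S.base, (∑ l, (S.coeff (f l) i : ℚ)) • S.P.root i := by
        refine Finset.sum_congr rfl fun i _ => ?_
        rw [Finset.sum_smul]

lemma isPosIdx_of_root_eq_sum {k : ι} {n : ℕ} (f : Fin n → ι)
    (hf : ∀ l, S.IsPosIdx (f l)) (h : S.P.root k = ∑ l, S.P.root (f l)) :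
    S.IsPosIdx k := by
  intro i
  by_cases hi : i ∈ S.base
  · have hc := S.coeff_unique k _ (h.trans (S.sum_expand f)) i hi
    have hnn : (0:ℚ) ≤ ∑ l, (S.coeff (f l) i : ℚ) :=
      Finset.sum_nonneg fun l _ => by exact_mod_cast hf l i
    rw [← hc] at hnn
    exact_mod_cast hnn
  · rw [S.coeff_supp k i hi]

lemma sum_ne_zero {n : ℕ} (hn : n ≠ 0) (f : Fin n → ι)
    (hf : ∀ l, S.IsPosIdx (f l)) : ∑ l, S.P.root (f l) ≠ 0 := by
  intro h
  rw [S.sum_expand f] at h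
  have hz : ∀ i ∈ S.base, (∑ l, (S.coeff (f l) i : ℚ)) = 0 := by
    intro i hi
    have hsum : ∑ x : S.base, ((∑ l, (S.coeff (f l) x : ℚ)) • S.P.root (x : ι)) = 0 := by
      rw [Finset.sum_coe_sort S.base (fun x => (∑ l, (S.coeff (f l) x : ℚ)) • S.P.root x)]
      exact h
    exact Fintype.linearIndependent_iff.mp S.baseIndep _ hsum ⟨i, hi⟩
  obtain ⟨l0⟩ := Fin.pos_iff_nonempty.mp (Nat.pos_of_ne_zero hn)
  have hcoeff : ∀ i, S.coeff (f l0) i = 0 := by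
    intro i
    by_cases hi : i ∈ S.base
    · have h0 := hz i hi
      have : ∀ l ∈ Finset.univ, (S.coeff (f l) i : ℚ) = 0 :=
        (Finset.sum_eq_zero_iff_of_nonneg
          (fun l _ => by exact_mod_cast hf l i)).mp h0
      exact_mod_cast this l0 (Finset.mem_univ l0)
    · exact S.coeff_supp _ i hi
  have : S.P.root (f l0) = 0 := by
    rw [S.coeff_spec (f l0)]
    simp [hcoeff]
  exact S.P.ne_zero (f l0) this

end PRS

end Aux

open PRS in
theorem stmt1 {ι M N : Type*} [Fintype ι] [AddCommGroup M] [Module ℚ M]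
    [AddCommGroup N] [Module ℚ N] (S : PRS ι M N)
    (A : Set M) (hA : A ⊆ S.posRoots) :
    S.Compatible A ↔
      ∀ α ∈ A, ∀ n : ℕ, 2 ≤ n → ∀ γ : Fin n → M,
        (∀ i, γ i ∈ S.posRoots) → α = ∑ i, γ i → ∃ i, γ i ∈ A := by
  constructor
  · intro hC
    suffices H : ∀ n : ℕ, ∀ α ∈ A, ∀ γ : Fin (n + 2) → M,
        (∀ i, γ i ∈ S.posRoots) → α = ∑ i, γ i → ∃ i, γ i ∈ A by
      intro α hα n hn γ hγ hsum
      obtain ⟨m, rfl⟩ : ∃ m, n = m + 2 := ⟨n - 2, by omega⟩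
      exact H m α hα γ hγ hsum
    intro n
    induction n with
    | zero =>
      intro α hα γ hγ hsum
      rcases hC α hα (γ 0) (hγ 0) (γ 1) (hγ 1) (by rw [hsum, Fin.sum_univ_two]) with h | h
      · exact ⟨0, h⟩
      · exact ⟨1, h⟩
    | succ m IH =>
      intro α hα γ hγ hsum
      obtain ⟨a, ha, hav⟩ := hA hα
      have hγ' : ∀ i, ∃ j, S.IsPosIdx j ∧ γ i = S.P.root j := hγ
      choose f hf1 hf2 using hγ'
      haveI := S.crys
      have hBpos : 0 < S.P.RootForm α α := by
        rw [hav]; exact S.P.rootForm_pos_of_ne_zero (Submodule.subset_span (Set.mem_range_self a))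
          (S.P.ne_zero a)
      have hsplit : S.P.RootForm α α = ∑ i, S.P.RootForm α (γ i) := by
        nth_rewrite 2 [hsum]
        exact map_sum (S.P.RootForm α) γ Finset.univ
      obtain ⟨i, hi⟩ : ∃ i, 0 < S.P.RootForm α (γ i) := by
        by_contra hcon
        push_neg at hcon
        have : S.P.RootForm α α ≤ 0 := by
          rw [hsplit]
          exact Finset.sum_nonpos fun i _ => hcon i
        linarith
      have hpa : 0 < S.P.pairing a (f i) := by
        rw [hav, hf2 i] at hi
        have h3 := S.P.toInvariantForm.two_mul_apply_root_root a (f i)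
        have hb : 0 < S.P.RootForm (S.P.root (f i)) (S.P.root (f i)) :=
          S.P.rootForm_pos_of_ne_zero (Submodule.subset_span (Set.mem_range_self (f i)))
            (S.P.ne_zero (f i))
        simp only [RootPairing.toInvariantForm_form] at h3
        exact pos_of_mul_pos_left (by rw [← h3]; linarith) hb.le
      have hrest : α - γ i = ∑ k : Fin (m + 2), γ (i.succAbove k) := by
        rw [hsum, Fin.sum_univ_succAbove γ i]
        abel
      have hsums : ∑ l : Fin (m + 2), S.P.root (f (i.succAbove l)) = α - γ i := by
        rw [hrest]
        exact Finset.sum_congr rfl fun l _ => (hf2 _).symm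
      have hne : S.P.root a ≠ S.P.root (f i) := by
        intro h
        apply S.sum_ne_zero (n := m + 2) (by omega) (fun l => f (i.succAbove l))
          (fun l => hf1 _)
        rw [hsums, hav, hf2 i, h, sub_self]
      obtain ⟨k, hk⟩ := prs_key_lemma S.P S.crys S.red a (f i) hne hpa
      have hkeq : S.P.root k = ∑ l : Fin (m + 2), S.P.root (f (i.succAbove l)) := by
        rw [hsums, ← hk, hav, hf2 i]
      have hkpos := S.isPosIdx_of_root_eq_sum _ (fun l => hf1 _) hkeq
      have hmem : α - γ i ∈ S.posRoots := ⟨k, hkpos, by rw [hav, hf2 i]; exact hk⟩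
      rcases hC α hα (γ i) (hγ i) (α - γ i) hmem (by abel) with h | h
      · exact ⟨i, h⟩
      · obtain ⟨l, hl⟩ := IH (α - γ i) h (fun k => γ (i.succAbove k)) (fun k => hγ _) hrest
        exact ⟨i.succAbove l, hl⟩
  · intro h γ hγ α hα β hβ hsum
    obtain ⟨i, hi⟩ := h γ hγ 2 le_rfl ![α, β] (fun i => by fin_cases i <;> assumption)
      (by rw [hsum]; simp [Fin.sum_univ_two])
    fin_cases i
    · exact Or.inl hi
    · exact Or.inr hi
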